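/- Perfect security of the n-dimensional dot-product encoding as a distribution statement: let R be a finite commutative ring, n ∈ ℕ, and let r₁, r₂ be uniformly distributed on Rⁿ and r₃ uniformly distributed on R, all independent. For any two input pairs (x, y) and (x′, y′) in Rⁿ × Rⁿ with ⟨x, y⟩ = ⟨x′, y′⟩, the distribution of the encoding (x + r₁, y + r₂, ⟨r₂, x⟩ + r₃, ⟨r₁, y⟩ + ⟨r₁, r₂⟩ − r₃) equals the distribution of (x′ + r₁, y′ + r₂, ⟨r₂, x′⟩ + r₃, ⟨r₁, y′⟩ + ⟨r₁, r₂⟩ − r₃). Hence a malicious function-party receiving the encoding learns nothing about the inputs beyond the dot product ⟨x, y⟩. -/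
import Mathlib

private lemma pmf_map_equiv_uniform {α : Type*} [Fintype α] [Nonempty α]
    (e : α ≃ α) : PMF.map e (PMF.uniformOfFintype α) = PMF.uniformOfFintype α := by
  ext b
  rw [PMF.map_apply]
  rw [tsum_eq_single (e.symm b) (by
    intro a ha
    have : b ≠ e a := fun hb => ha (by simp [hb])
    simp [this])]
  simp [PMF.uniformOfFintype_apply]

private lemma sum_expand {R : Type*} [CommRing R] {n : ℕ} (u a b v : Fin n → R) :
    ∑ d, (u d + a d - b d) * v d
      = (∑ d, u d * v d) + (∑ d, a d * v d) - ∑ d, b d * v d := by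
  simp only [add_mul, sub_mul, Finset.sum_add_distrib, Finset.sum_sub_distrib]

/-- Perfect security of the n-dimensional dot-product encoding: over a finite
commutative ring with independent uniform randomness, any two input pairs with the same
dot product induce identical distributions of the encoding
`(x+r₁, y+r₂, ⟨r₂,x⟩+r₃, ⟨r₁,y⟩+⟨r₁,r₂⟩−r₃)`. -/
theorem framework_dot_perfect_security {R : Type*} [CommRing R] [Fintype R]
    [DecidableEq R] [Nonempty R] (n : ℕ) (x y x' y' : Fin n → R)
    (h : ∑ d, x d * y d = ∑ d, x' d * y' d) :
    PMF.map (fun r : (Fin n → R) × (Fin n → R) × R =>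
        ((x + r.1, y + r.2.1, (∑ d, r.2.1 d * x d) + r.2.2,
          (∑ d, r.1 d * y d) + (∑ d, r.1 d * r.2.1 d) - r.2.2) :
          (Fin n → R) × (Fin n → R) × R × R))
      (PMF.uniformOfFintype ((Fin n → R) × (Fin n → R) × R)) =
    PMF.map (fun r : (Fin n → R) × (Fin n → R) × R =>
        ((x' + r.1, y' + r.2.1, (∑ d, r.2.1 d * x' d) + r.2.2,
          (∑ d, r.1 d * y' d) + (∑ d, r.1 d * r.2.1 d) - r.2.2) :
          (Fin n → R) × (Fin n → R) × R × R))
      (PMF.uniformOfFintype ((Fin n → R) × (Fin n → R) × R)) := by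
  set e : ((Fin n → R) × (Fin n → R) × R) ≃ ((Fin n → R) × (Fin n → R) × R) :=
    { toFun := fun r => (r.1 + x - x', r.2.1 + y - y',
        (∑ d, r.2.1 d * x d) + r.2.2 - ∑ d, (r.2.1 + y - y') d * x' d),
      invFun := fun s => (s.1 - x + x', s.2.1 - y + y',
        (∑ d, s.2.1 d * x' d) + s.2.2 - ∑ d, (s.2.1 - y + y') d * x d),
      left_inv := by
        rintro ⟨r1, r2, r3⟩
        simp only [Prod.mk.injEq, Pi.add_apply, Pi.sub_apply]
        refine ⟨by ext d; simp only [Pi.add_apply, Pi.sub_apply]; ring,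
          by ext d; simp only [Pi.add_apply, Pi.sub_apply]; ring, ?_⟩
        have h2 : ∑ d, (r2 d + y d - y' d - y d + y' d) * x d = ∑ d, r2 d * x d :=
          Finset.sum_congr rfl fun d _ => by ring
        rw [h2]; ring
      right_inv := by
        rintro ⟨s1, s2, s3⟩
        simp only [Prod.mk.injEq, Pi.add_apply, Pi.sub_apply]
        refine ⟨by ext d; simp only [Pi.add_apply, Pi.sub_apply]; ring,
          by ext d; simp only [Pi.add_apply, Pi.sub_apply]; ring, ?_⟩
        have h2 : ∑ d, (s2 d - y d + y' d + y d - y' d) * x' d = ∑ d, s2 d * x' d :=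
          Finset.sum_congr rfl fun d _ => by ring
        rw [h2]; ring } with he
  have hc : ∀ u v : Fin n → R, ∑ d, u d * v d = ∑ d, v d * u d := by
    intro u v; exact Finset.sum_congr rfl fun d _ => by ring
  have key : (fun r : (Fin n → R) × (Fin n → R) × R =>
        ((x + r.1, y + r.2.1, (∑ d, r.2.1 d * x d) + r.2.2,
          (∑ d, r.1 d * y d) + (∑ d, r.1 d * r.2.1 d) - r.2.2) :
          (Fin n → R) × (Fin n → R) × R × R)) =
      (fun r : (Fin n → R) × (Fin n → R) × R =>
        ((x' + r.1, y' + r.2.1, (∑ d, r.2.1 d * x' d) + r.2.2,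
          (∑ d, r.1 d * y' d) + (∑ d, r.1 d * r.2.1 d) - r.2.2) :
          (Fin n → R) × (Fin n → R) × R × R)) ∘ e := by
    funext r
    obtain ⟨r1, r2, r3⟩ := r
    simp only [he, Function.comp_apply, Equiv.coe_fn_mk, Prod.mk.injEq, Pi.add_apply,
      Pi.sub_apply]
    refine ⟨by ext d; simp only [Pi.add_apply, Pi.sub_apply]; ring,
      by ext d; simp only [Pi.add_apply, Pi.sub_apply]; ring, by ring, ?_⟩
    have e1 : ∑ d, (r1 d + x d - x' d) * y' d
        = (∑ d, r1 d * y' d) + (∑ d, x d * y' d) - ∑ d, x' d * y' d := sum_expand ..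
    have e2 : ∑ d, (r1 d + x d - x' d) * (r2 d + y d - y' d)
        = (∑ d, r1 d * (r2 d + y d - y' d)) + (∑ d, x d * (r2 d + y d - y' d))
          - ∑ d, x' d * (r2 d + y d - y' d) := sum_expand ..
    have e3 : ∀ u : Fin n → R, ∑ d, u d * (r2 d + y d - y' d)
        = (∑ d, u d * r2 d) + (∑ d, u d * y d) - ∑ d, u d * y' d := by
      intro u
      have := sum_expand r2 y y' u
      rw [hc u fun d => r2 d + y d - y' d]
      rw [this, hc r2 u, hc y u, hc y' u]
    have e4 : ∑ d, (r2 d + y d - y' d) * x' d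
        = (∑ d, r2 d * x' d) + (∑ d, y d * x' d) - ∑ d, y' d * x' d := sum_expand ..
    rw [e1, e2, e3 r1, e3 x, e3 x', e4]
    rw [hc y x', hc y' x', h, hc r2 x, hc r2 x']
    ring
  rw [key, ← PMF.map_comp, pmf_map_equiv_uniform]
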